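/- Let r ≥ 3, d ≥ 3 and let H be an r-uniform supertree with a vertex u. Let j = ⌈d/2⌉ and let P_d^r(e_j,u)H be the hypergraph obtained from the disjoint union of the loose path P_d^r and H by identifying a fixed core (non-joint) vertex of the edge e_j of P_d^r with the vertex u of H. Then φ(P_d^r(e_j,u)H, x) = φ(P_d^r, x)·φ(H−u, x) − x^{r−3}·φ(P_{⌊d/2⌋}^r, x)·φ(P_{⌈d/2⌉−1}^r, x)·Σ_{e ∈ E_u(H)} φ(H − V(e), x), where the sum runs over all edges e of H containing u. -/

import Mathlib

open Classical

noncomputable section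

/-- A finite hypergraph: a finite vertex set together with a finite set of edges,
each edge being a finite set of vertices. -/
structure FinHypergraph (α : Type*) where
  verts : Finset α
  edges : Finset (Finset α)

namespace FinHypergraph

variable {α : Type*}

/-- Every edge of `H` is a subset of the vertex set of `H`. -/
def WellFormed (H : FinHypergraph α) : Prop := ∀ e ∈ H.edges, e ⊆ H.verts

/-- `H` is `r`-uniform: every edge has exactly `r` vertices. -/
def Uniform (H : FinHypergraph α) (r : ℕ) : Prop := ∀ e ∈ H.edges, e.card = r

/-- A set of edges is a matching if its members are pairwise disjoint. -/
def IsMatchingSet (M : Finset (Finset α)) : Prop :=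
  ∀ e ∈ M, ∀ f ∈ M, e ≠ f → Disjoint e f

/-- `m(H,k)`: the number of matchings of `H` consisting of exactly `k` edges. -/
noncomputable def matchCount (H : FinHypergraph α) (k : ℕ) : ℕ :=
  (H.edges.powerset.filter (fun M => M.card = k ∧ IsMatchingSet M)).card

/-- The matching polynomial `φ(H,x) = Σ_k (-1)^k m(H,k) x^(n - r·k)` of an
`r`-uniform hypergraph `H` with `n` vertices, evaluated at a real number `x`. -/
noncomputable def matchPoly (H : FinHypergraph α) (r : ℕ) (x : ℝ) : ℝ :=
  ∑ k ∈ Finset.range (H.verts.card + 1),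
    (-1 : ℝ) ^ k * (H.matchCount k : ℝ) * x ^ (H.verts.card - r * k)

/-- `H − S`: delete the vertices of `S` and all edges meeting `S`. -/
def removeVerts (H : FinHypergraph α) (S : Finset α) : FinHypergraph α :=
  ⟨H.verts \ S, H.edges.filter (fun e => Disjoint e S)⟩

/-- `H` is connected: nonempty vertex set, and any two vertices are linked by a chain of
vertices successively lying in a common edge. -/
def Connected (H : FinHypergraph α) : Prop :=
  H.verts.Nonempty ∧ ∀ u ∈ H.verts, ∀ v ∈ H.verts,
    Relation.ReflTransGen (fun a b => ∃ e ∈ H.edges, a ∈ e ∧ b ∈ e) u v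

/-- `H` has a cycle: an alternating sequence `v_0 e_0 v_1 e_1 … v_{ℓ-1} e_{ℓ-1} v_0`
(with `ℓ ≥ 2`) of distinct vertices and distinct edges such that consecutive vertices lie
in the intermediate edge. -/
def HasCycle (H : FinHypergraph α) : Prop :=
  ∃ (ℓ : ℕ) (v : ℕ → α) (e : ℕ → Finset α), 2 ≤ ℓ ∧
    Set.InjOn v (Set.Iio ℓ) ∧ Set.InjOn e (Set.Iio ℓ) ∧
    ∀ i < ℓ, e i ∈ H.edges ∧ v i ∈ e i ∧ v ((i + 1) % ℓ) ∈ e i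

/-- An `r`-uniform supertree: a connected acyclic `r`-uniform hypergraph. -/
def IsSupertree (H : FinHypergraph α) (r : ℕ) : Prop :=
  H.WellFormed ∧ H.Uniform r ∧ H.Connected ∧ ¬ H.HasCycle

/-- The edges of the `r`-uniform loose path of length `p` along the vertex labelling `w`:
the `i`-th edge consists of the `r` vertices `w (i*(r-1)), …, w ((i+1)*(r-1))`, so that
consecutive edges share exactly one vertex. -/
def loosePathEdges (r p : ℕ) (w : ℕ → α) : Finset (Finset α) :=
  (Finset.range p).image (fun i => (Finset.Icc (i * (r - 1)) ((i + 1) * (r - 1))).image w)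

/-- `P` is an `r`-uniform loose path with `m` edges (`P_m^r`); for `m = 0` it is a single
vertex with no edge. -/
def IsLoosePath (r m : ℕ) (P : FinHypergraph α) : Prop :=
  ∃ w : ℕ → α, Set.InjOn w (Set.Iic (m * (r - 1))) ∧
    P.verts = (Finset.Icc 0 (m * (r - 1))).image w ∧
    P.edges = loosePathEdges r m w

/-- `T'` is obtained from the disjoint union of the loose path `P_d^r` and `H` by
identifying the path vertex with label `c` with the vertex `u` of `H` (all other path
vertices being new). -/
def IsPathIdentify (r d c : ℕ) (H : FinHypergraph α) (u : α) (T' : FinHypergraph α) : Prop :=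
  ∃ w : ℕ → α, Set.InjOn w (Set.Iic (d * (r - 1))) ∧ w c = u ∧
    (∀ t, t ≤ d * (r - 1) → t ≠ c → w t ∉ H.verts) ∧
    T'.verts = H.verts ∪ (Finset.Icc 0 (d * (r - 1))).image w ∧
    T'.edges = H.edges ∪ loosePathEdges r d w

end FinHypergraph

open FinHypergraph

/-!
Gluing hypergraphs `G` and `G'` at one vertex `u` and expanding along `u` with the vertex
recurrence `φ(G) = x φ(G - u) - Σ_{e ∋ u} φ(G - V(e))` gives
`φ(G ∪ G') = φ(G) φ(G' - u) - φ(G - u) Σ_{e ∋ u, e ∈ G'} φ(G' - V(e))`,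
because every piece that appears is a vertex-disjoint union and `φ` is multiplicative on those.
Take `G = P_d^r` and `G' = H`. Deleting a core vertex of `e_j` from `P_d^r` leaves
`P_{j-1}^r`, the `r - 3` other core vertices of `e_j` and `P_{d-j}^r`, with `d - j = ⌊d/2⌋`;
since `φ` is invariant under relabelling vertices, every loose path may be replaced by the
standard one on `0, …, m(r-1)`.
-/

lemma Finset.disjoint_image_iff_of_injOn {α β : Type*} [DecidableEq α] [DecidableEq β]
    {f : α → β} {s s₁ s₂ : Finset α} (hf : Set.InjOn f s) (h₁ : s₁ ⊆ s) (h₂ : s₂ ⊆ s) :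
    Disjoint (s₁.image f) (s₂.image f) ↔ Disjoint s₁ s₂ := by
  rw [Finset.disjoint_iff_inter_eq_empty, Finset.disjoint_iff_inter_eq_empty,
    ← Finset.image_inter_of_injOn _ _ (hf.mono (mod_cast Finset.union_subset h₁ h₂)),
    Finset.image_eq_empty]

lemma Nat.mem_Icc_mul_iff_of_lt_of_lt {s i j c : ℕ} (hc₁ : i * s < c) (hc₂ : c < (i + 1) * s) :
    c ∈ Finset.Icc (j * s) ((j + 1) * s) ↔ j = i := by
  refine ⟨fun hc => ?_, fun h => ?_⟩
  · rw [Finset.mem_Icc] at hc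
    rcases lt_trichotomy j i with h | h | h
    · have : (j + 1) * s ≤ i * s := Nat.mul_le_mul_right s h
      omega
    · exact h
    · have : (i + 1) * s ≤ j * s := Nat.mul_le_mul_right s h
      omega
  · subst h
    rw [Finset.mem_Icc]
    omega

namespace FinHypergraph

variable {α β : Type*} [DecidableEq β]

@[ext]
lemma ext {G G' : FinHypergraph α} (hv : G.verts = G'.verts) (he : G.edges = G'.edges) :
    G = G' := by
  cases G; cases G'; congr

instance : Union (FinHypergraph α) := ⟨fun G G' => ⟨G.verts ∪ G'.verts, G.edges ∪ G'.edges⟩⟩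

@[simp] lemma union_verts (G G' : FinHypergraph α) : (G ∪ G').verts = G.verts ∪ G'.verts := rfl

@[simp] lemma union_edges (G G' : FinHypergraph α) : (G ∪ G').edges = G.edges ∪ G'.edges := rfl

def map (f : α → β) (G : FinHypergraph α) : FinHypergraph β :=
  ⟨G.verts.image f, G.edges.image (Finset.image f)⟩

@[simp] lemma map_verts (f : α → β) (G : FinHypergraph α) : (G.map f).verts = G.verts.image f :=
  rfl

@[simp] lemma map_edges (f : α → β) (G : FinHypergraph α) :
    (G.map f).edges = G.edges.image (Finset.image f) := rfl

@[simp] lemma removeVerts_verts (G : FinHypergraph α) (S : Finset α) :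
    (G.removeVerts S).verts = G.verts \ S := rfl

@[simp] lemma removeVerts_edges (G : FinHypergraph α) (S : Finset α) :
    (G.removeVerts S).edges = G.edges.filter (fun e => Disjoint e S) := rfl

lemma removeVerts_verts_subset (G : FinHypergraph α) (S : Finset α) :
    (G.removeVerts S).verts ⊆ G.verts :=
  Finset.sdiff_subset

lemma removeVerts_union (G G' : FinHypergraph α) (S : Finset α) :
    (G ∪ G').removeVerts S = G.removeVerts S ∪ G'.removeVerts S := by
  ext1
  · exact Finset.union_sdiff_distrib _ _ _
  · exact Finset.filter_union _ _ _

lemma WellFormed.union {G G' : FinHypergraph α} (h : G.WellFormed) (h' : G'.WellFormed) :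
    (G ∪ G').WellFormed := by
  intro e he
  rcases Finset.mem_union.1 he with he | he
  · exact (h e he).trans Finset.subset_union_left
  · exact (h' e he).trans Finset.subset_union_right

lemma Uniform.union {G G' : FinHypergraph α} {r : ℕ} (h : G.Uniform r) (h' : G'.Uniform r) :
    (G ∪ G').Uniform r := by
  intro e he
  rcases Finset.mem_union.1 he with he | he
  exacts [h e he, h' e he]

lemma WellFormed.removeVerts {G : FinHypergraph α} (h : G.WellFormed) (S : Finset α) :
    (G.removeVerts S).WellFormed := by
  intro e he
  obtain ⟨he, hdisj⟩ := Finset.mem_filter.1 he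
  exact Finset.subset_sdiff.2 ⟨h e he, hdisj⟩

lemma Uniform.removeVerts {G : FinHypergraph α} {r : ℕ} (h : G.Uniform r) (S : Finset α) :
    (G.removeVerts S).Uniform r :=
  fun e he => h e (Finset.mem_filter.1 he).1

lemma WellFormed.map {G : FinHypergraph α} (h : G.WellFormed) (f : α → β) :
    (G.map f).WellFormed := by
  intro e he
  obtain ⟨e, he', rfl⟩ := Finset.mem_image.1 he
  exact Finset.image_subset_image (h e he')

lemma Uniform.map {G : FinHypergraph α} {r : ℕ} {f : α → β} (h : G.Uniform r)
    (hG : G.WellFormed) (hf : Set.InjOn f G.verts) : (G.map f).Uniform r := by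
  intro e he
  obtain ⟨e, he', rfl⟩ := Finset.mem_image.1 he
  rw [Finset.card_image_of_injOn (hf.mono (hG e he')), h e he']

lemma removeVerts_congr {G : FinHypergraph α} (hG : G.WellFormed) {S S' : Finset α}
    (h : G.verts ∩ S = G.verts ∩ S') : G.removeVerts S = G.removeVerts S' := by
  have hmem : ∀ a ∈ G.verts, a ∈ S ↔ a ∈ S' := fun a ha => by
    simpa [ha] using Finset.ext_iff.1 h a
  ext1
  · ext a
    simp only [removeVerts_verts, Finset.mem_sdiff]
    exact and_congr_right fun ha => not_congr (hmem a ha)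
  · refine Finset.filter_congr fun e he => ?_
    simp only [Finset.disjoint_left]
    exact forall₂_congr fun a ha => not_congr (hmem a (hG e he ha))

def matchings (G : FinHypergraph α) : Finset (Finset (Finset α)) :=
  G.edges.powerset.filter IsMatchingSet

lemma mem_matchings {G : FinHypergraph α} {M : Finset (Finset α)} :
    M ∈ G.matchings ↔ M ⊆ G.edges ∧ IsMatchingSet M := by
  simp [matchings]

lemma IsMatchingSet.subset {M M' : Finset (Finset α)} (hM : IsMatchingSet M) (h : M' ⊆ M) :
    IsMatchingSet M' :=
  fun e he f hf hef => hM e (h he) f (h hf) hef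

lemma matchCount_eq_card_filter (G : FinHypergraph α) (k : ℕ) :
    G.matchCount k = (G.matchings.filter (·.card = k)).card := by
  rw [matchCount, matchings, Finset.filter_filter]
  simp only [and_comm]

lemma mul_card_le_card_verts {G : FinHypergraph α} {r : ℕ} (hG : G.WellFormed)
    (hGr : G.Uniform r) {M : Finset (Finset α)} (hM : M ∈ G.matchings) :
    r * M.card ≤ G.verts.card := by
  obtain ⟨hME, hMm⟩ := mem_matchings.1 hM
  calc r * M.card = ∑ e ∈ M, e.card := by
        rw [Finset.sum_congr rfl fun e he => hGr e (hME he), Finset.sum_const, smul_eq_mul,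
          mul_comm]
    _ = (M.biUnion id).card := (Finset.card_biUnion fun e he f hf hef => hMm e he f hf hef).symm
    _ ≤ G.verts.card := Finset.card_le_card <| Finset.biUnion_subset.2 fun e he => hG e (hME he)

theorem matchPoly_eq_sum_matchings {G : FinHypergraph α} {r : ℕ} (hr : 0 < r)
    (hG : G.WellFormed) (hGr : G.Uniform r) (x : ℝ) :
    G.matchPoly r x
      = ∑ M ∈ G.matchings, (-1 : ℝ) ^ M.card * x ^ (G.verts.card - r * M.card) := by
  have hcard : ∀ M ∈ G.matchings, M.card ∈ Finset.range (G.verts.card + 1) := fun M hM => by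
    have := mul_card_le_card_verts hG hGr hM
    rw [Finset.mem_range]
    nlinarith
  rw [matchPoly, ← Finset.sum_fiberwise_of_maps_to hcard]
  refine Finset.sum_congr rfl fun k _ => ?_
  rw [Finset.sum_congr rfl fun M hM => by rw [(Finset.mem_filter.1 hM).2], Finset.sum_const,
    nsmul_eq_mul, matchCount_eq_card_filter]
  ring

lemma matchings_removeVerts (G : FinHypergraph α) (S : Finset α) :
    (G.removeVerts S).matchings = G.matchings.filter (fun M => ∀ e ∈ M, Disjoint e S) := by
  ext M
  simp only [mem_matchings, removeVerts_edges, Finset.mem_filter, Finset.subset_iff]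
  grind

lemma isMatchingSet_image_iff {G : FinHypergraph α} {f : α → β} (hG : G.WellFormed)
    (hf : Set.InjOn f G.verts) {M : Finset (Finset α)} (hM : M ⊆ G.edges) :
    IsMatchingSet (M.image (Finset.image f)) ↔ IsMatchingSet M := by
  have hsub : ∀ e ∈ M, e ⊆ G.verts := fun e he => hG e (hM he)
  have himage_inj : ∀ e ∈ M, ∀ e' ∈ M, e.image f = e'.image f ↔ e = e' := fun e he e' he' =>
    Finset.image_eq_image_iff_of_injOn hf (hsub e he) (hsub e' he')
  simp only [IsMatchingSet, Finset.forall_mem_image]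
  refine forall₂_congr fun e he => forall₂_congr fun e' he' => ?_
  rw [ne_eq, ne_eq, himage_inj e he e' he',
    Finset.disjoint_image_iff_of_injOn hf (hsub e he) (hsub e' he')]

theorem matchPoly_map {G : FinHypergraph α} {f : α → β} (hG : G.WellFormed)
    (hf : Set.InjOn f G.verts) (r : ℕ) (x : ℝ) :
    (G.map f).matchPoly r x = G.matchPoly r x := by
  have hF : Set.InjOn (Finset.image f) G.edges := fun e he e' he' =>
    (Finset.image_eq_image_iff_of_injOn hf (hG e he) (hG e' he')).1
  have hcount : ∀ k, (G.map f).matchCount k = G.matchCount k := by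
    intro k
    rw [matchCount, matchCount, map_edges, Finset.powerset_image, Finset.filter_image,
      Finset.card_image_of_injOn]
    · refine congrArg Finset.card (Finset.filter_congr fun M hM => ?_)
      have hM : M ⊆ G.edges := Finset.mem_powerset.1 hM
      rw [Finset.card_image_of_injOn (hF.mono hM), isMatchingSet_image_iff hG hf hM]
    · intro M hM M' hM'
      exact (Finset.image_eq_image_iff_of_injOn hF
        (Finset.mem_powerset.1 (Finset.mem_filter.1 hM).1)
        (Finset.mem_powerset.1 (Finset.mem_filter.1 hM').1)).1
  simp only [matchPoly, map_verts, Finset.card_image_of_injOn hf, hcount]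

lemma map_removeVerts {G : FinHypergraph α} {f : α → β} (hG : G.WellFormed)
    (hf : Set.InjOn f G.verts) {S : Finset α} (hS : S ⊆ G.verts) :
    (G.map f).removeVerts (S.image f) = (G.removeVerts S).map f := by
  ext1
  · simp only [removeVerts_verts, map_verts]
    convert (Finset.image_sdiff_of_injOn hf hS).symm
  · simp only [removeVerts_edges, map_edges]
    convert (Finset.filter_image (p := fun e => Disjoint e (S.image f))).trans
      (congrArg _ (Finset.filter_congr fun e he =>
        Finset.disjoint_image_iff_of_injOn hf (hG e he) hS))

lemma matchPoly_map_removeVerts_singleton {G : FinHypergraph α} {f : α → β}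
    (hG : G.WellFormed) (hf : Set.InjOn f G.verts) {v : α} (hv : v ∈ G.verts) (r : ℕ) (x : ℝ) :
    ((G.map f).removeVerts {f v}).matchPoly r x = (G.removeVerts {v}).matchPoly r x := by
  rw [← Finset.image_singleton, map_removeVerts hG hf (Finset.singleton_subset_iff.2 hv),
    matchPoly_map (hG.removeVerts _) (hf.mono (Finset.coe_subset.2 (removeVerts_verts_subset _ _)))]

lemma disjoint_edges_of_disjoint_verts {G G' : FinHypergraph α} {r : ℕ} (hr : 0 < r)
    (hG : G.WellFormed) (hG' : G'.WellFormed) (hGr : G.Uniform r)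
    (h : Disjoint G.verts G'.verts) : Disjoint G.edges G'.edges := by
  rw [Finset.disjoint_left]
  intro e he he'
  obtain ⟨a, ha⟩ := Finset.card_pos.1 ((hGr e he).symm ▸ hr)
  exact Finset.disjoint_left.1 h (hG e he ha) (hG' e he' ha)

lemma matchings_union_of_disjoint {G G' : FinHypergraph α} (hG : G.WellFormed)
    (hG' : G'.WellFormed) (h : Disjoint G.verts G'.verts) :
    (G ∪ G').matchings = (G.matchings ×ˢ G'.matchings).image (fun p => p.1 ∪ p.2) := by
  ext M
  simp only [Finset.mem_image, Finset.mem_product, Prod.exists]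
  constructor
  · intro hM
    obtain ⟨hME, hMm⟩ := mem_matchings.1 hM
    refine ⟨M.filter (· ∈ G.edges), M.filter (· ∈ G'.edges), ⟨?_, ?_⟩, ?_⟩
    · exact mem_matchings.2
        ⟨fun e he => (Finset.mem_filter.1 he).2, hMm.subset (Finset.filter_subset _ _)⟩
    · exact mem_matchings.2
        ⟨fun e he => (Finset.mem_filter.1 he).2, hMm.subset (Finset.filter_subset _ _)⟩
    · rw [← Finset.filter_or]
      exact Finset.filter_true_of_mem fun e he => Finset.mem_union.1 (hME he)
  · rintro ⟨M₁, M₂, ⟨h₁, h₂⟩, rfl⟩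
    obtain ⟨hE₁, hm₁⟩ := mem_matchings.1 h₁
    obtain ⟨hE₂, hm₂⟩ := mem_matchings.1 h₂
    have hcross : ∀ e ∈ M₁, ∀ f ∈ M₂, Disjoint e f := fun e he f hf =>
      Disjoint.mono (hG e (hE₁ he)) (hG' f (hE₂ hf)) h
    refine mem_matchings.2 ⟨Finset.union_subset_union hE₁ hE₂, fun e he f hf hef => ?_⟩
    rcases Finset.mem_union.1 he with he | he <;> rcases Finset.mem_union.1 hf with hf | hf
    exacts [hm₁ e he f hf hef, hcross e he f hf, (hcross f hf e he).symm, hm₂ e he f hf hef]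

lemma union_injOn_matchings {G G' : FinHypergraph α} (hE : Disjoint G.edges G'.edges) :
    Set.InjOn (fun p : Finset (Finset α) × Finset (Finset α) => p.1 ∪ p.2)
      (G.matchings ×ˢ G'.matchings : Finset _) := by
  have hsplit : ∀ M₁ ⊆ G.edges, ∀ M₂ ⊆ G'.edges,
      (M₁ ∪ M₂) ∩ G.edges = M₁ ∧ (M₁ ∪ M₂) ∩ G'.edges = M₂ := fun M₁ h₁ M₂ h₂ => by
    simp only [Finset.union_inter_distrib_right, Finset.inter_eq_left.2 h₁,
      Finset.inter_eq_left.2 h₂, Finset.disjoint_iff_inter_eq_empty.1 (hE.mono_left h₁),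
      Finset.disjoint_iff_inter_eq_empty.1 (hE.symm.mono_left h₂), Finset.union_empty,
      Finset.empty_union, and_self]
  rintro ⟨M₁, M₂⟩ hM ⟨N₁, N₂⟩ hN (hMN : M₁ ∪ M₂ = N₁ ∪ N₂)
  simp only [Finset.coe_product, Set.mem_prod, Finset.mem_coe, mem_matchings] at hM hN
  obtain ⟨hM₁, hM₂⟩ := hsplit M₁ hM.1.1 M₂ hM.2.1
  obtain ⟨hN₁, hN₂⟩ := hsplit N₁ hN.1.1 N₂ hN.2.1
  exact Prod.ext (hM₁.symm.trans (by rw [hMN, hN₁])) (hM₂.symm.trans (by rw [hMN, hN₂]))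

theorem matchPoly_union_of_disjoint {G G' : FinHypergraph α} {r : ℕ} (hr : 0 < r)
    (hG : G.WellFormed) (hGr : G.Uniform r) (hG' : G'.WellFormed) (hG'r : G'.Uniform r)
    (h : Disjoint G.verts G'.verts) (x : ℝ) :
    (G ∪ G').matchPoly r x = G.matchPoly r x * G'.matchPoly r x := by
  have hE := disjoint_edges_of_disjoint_verts hr hG hG' hGr h
  rw [matchPoly_eq_sum_matchings hr (hG.union hG') (hGr.union hG'r),
    matchings_union_of_disjoint hG hG' h, Finset.sum_image (union_injOn_matchings hE),
    Finset.sum_product, matchPoly_eq_sum_matchings hr hG hGr,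
    matchPoly_eq_sum_matchings hr hG' hG'r, Finset.sum_mul_sum]
  refine Finset.sum_congr rfl fun M₁ h₁ => Finset.sum_congr rfl fun M₂ h₂ => ?_
  have b₁ := mul_card_le_card_verts hG hGr h₁
  have b₂ := mul_card_le_card_verts hG' hG'r h₂
  have hM : Disjoint M₁ M₂ := hE.mono (mem_matchings.1 h₁).1 (mem_matchings.1 h₂).1
  rw [union_verts, Finset.card_union_of_disjoint h, Finset.card_union_of_disjoint hM,
    show G.verts.card + G'.verts.card - r * (M₁.card + M₂.card)
      = (G.verts.card - r * M₁.card) + (G'.verts.card - r * M₂.card) by rw [mul_add]; omega]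
  ring

lemma filter_mem_matchings {G : FinHypergraph α} {e : Finset α} (he : e ∈ G.edges) :
    G.matchings.filter (e ∈ ·) = (G.removeVerts e).matchings.image (insert e) := by
  ext M
  simp only [Finset.mem_filter, Finset.mem_image, matchings_removeVerts]
  constructor
  · rintro ⟨hM, heM⟩
    obtain ⟨hME, hMm⟩ := mem_matchings.1 hM
    refine ⟨M.erase e, ⟨mem_matchings.2 ⟨(Finset.erase_subset _ _).trans hME,
      hMm.subset (Finset.erase_subset _ _)⟩, fun f hf => ?_⟩, Finset.insert_erase heM⟩
    obtain ⟨hfe, hfM⟩ := Finset.mem_erase.1 hf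
    exact hMm f hfM e heM hfe
  · rintro ⟨M', ⟨hM', hdisj⟩, rfl⟩
    obtain ⟨hME, hMm⟩ := mem_matchings.1 hM'
    refine ⟨mem_matchings.2 ⟨Finset.insert_subset he hME, ?_⟩, Finset.mem_insert_self e M'⟩
    intro f hf g hg hfg
    rcases Finset.mem_insert.1 hf with rfl | hf' <;> rcases Finset.mem_insert.1 hg with rfl | hg'
    exacts [absurd rfl hfg, (hdisj g hg').symm, hdisj f hf', hMm f hf' g hg' hfg]

lemma sum_filter_mem_matchings {G : FinHypergraph α} {r : ℕ} (hr : 0 < r) (hG : G.WellFormed)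
    (hGr : G.Uniform r) {e : Finset α} (he : e ∈ G.edges) (x : ℝ) :
    ∑ M ∈ G.matchings.filter (e ∈ ·), (-1 : ℝ) ^ M.card * x ^ (G.verts.card - r * M.card)
      = -(G.removeVerts e).matchPoly r x := by
  have he_ne : e.Nonempty := Finset.card_pos.1 ((hGr e he).symm ▸ hr)
  have hnot_mem : ∀ M ∈ (G.removeVerts e).matchings, e ∉ M := fun M hM heM => by
    have := (Finset.mem_filter.1 ((mem_matchings.1 hM).1 heM)).2
    exact he_ne.ne_empty (disjoint_self.1 this)
  have hcard : (G.removeVerts e).verts.card = G.verts.card - r := by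
    rw [removeVerts_verts, Finset.card_sdiff_of_subset (hG e he), hGr e he]
  rw [filter_mem_matchings he, Finset.sum_image, matchPoly_eq_sum_matchings hr (hG.removeVerts e)
    (hGr.removeVerts e), hcard, ← Finset.sum_neg_distrib]
  · refine Finset.sum_congr rfl fun M hM => ?_
    rw [Finset.card_insert_of_notMem (hnot_mem M hM),
      show G.verts.card - r * (M.card + 1) = G.verts.card - r - r * M.card by
        rw [mul_add]; omega]
    ring
  · intro M hM N hN hMN
    rw [← Finset.erase_insert (hnot_mem M hM), ← Finset.erase_insert (hnot_mem N hN)]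
    exact congrArg (·.erase e) hMN

theorem matchPoly_eq_mul_removeVerts_sub_sum {G : FinHypergraph α} {r : ℕ} (hr : 0 < r)
    (hG : G.WellFormed) (hGr : G.Uniform r) {v : α} (hv : v ∈ G.verts) (x : ℝ) :
    G.matchPoly r x
      = x * (G.removeVerts {v}).matchPoly r x
        - ∑ e ∈ G.edges.filter (v ∈ ·), (G.removeVerts e).matchPoly r x := by
  have hcard : (G.removeVerts {v}).verts.card + 1 = G.verts.card := by
    rw [removeVerts_verts, Finset.card_sdiff_of_subset (Finset.singleton_subset_iff.2 hv),
      Finset.card_singleton, Nat.sub_add_cancel (Finset.card_pos.2 ⟨v, hv⟩)]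
  have havoid : ∑ M ∈ (G.removeVerts {v}).matchings,
      (-1 : ℝ) ^ M.card * x ^ (G.verts.card - r * M.card)
        = x * (G.removeVerts {v}).matchPoly r x := by
    rw [matchPoly_eq_sum_matchings hr (hG.removeVerts _) (hGr.removeVerts _), Finset.mul_sum]
    refine Finset.sum_congr rfl fun M hM => ?_
    have := mul_card_le_card_verts (hG.removeVerts _) (hGr.removeVerts _) hM
    rw [← hcard, show (G.removeVerts {v}).verts.card + 1 - r * M.card
      = (G.removeVerts {v}).verts.card - r * M.card + 1 by omega, pow_succ]
    ring
  have hthrough : G.matchings.filter (fun M => ¬ ∀ e ∈ M, Disjoint e {v})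
      = (G.edges.filter (v ∈ ·)).biUnion (fun e => G.matchings.filter (e ∈ ·)) := by
    ext M
    simp only [Finset.mem_filter, Finset.mem_biUnion, Finset.disjoint_singleton_right, not_forall,
      not_not, mem_matchings]
    grind
  have hpairwise : (G.edges.filter (v ∈ ·) : Set (Finset α)).PairwiseDisjoint
      (fun e => G.matchings.filter (e ∈ ·)) := by
    intro e he f hf hef
    simp only [Function.onFun, Finset.disjoint_left, Finset.mem_filter]
    rintro M ⟨hM, heM⟩ ⟨-, hfM⟩
    exact Finset.disjoint_left.1 ((mem_matchings.1 hM).2 e heM f hfM hef)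
      (Finset.mem_filter.1 he).2 (Finset.mem_filter.1 hf).2
  rw [matchPoly_eq_sum_matchings hr hG hGr,
    ← Finset.sum_filter_add_sum_filter_not _ (fun M => ∀ e ∈ M, Disjoint e {v}),
    ← matchings_removeVerts, havoid, hthrough, Finset.sum_biUnion hpairwise,
    Finset.sum_congr rfl fun e he =>
      sum_filter_mem_matchings hr hG hGr (Finset.mem_filter.1 he).1 x,
    Finset.sum_neg_distrib, sub_eq_add_neg]

section Gluing

variable {G G' : FinHypergraph α} {u : α}

lemma disjoint_edges_of_inter_eq_singleton {r : ℕ} (hr : 2 ≤ r) (hG : G.WellFormed)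
    (hG' : G'.WellFormed) (hGr : G.Uniform r) (h : G.verts ∩ G'.verts = {u}) :
    Disjoint G.edges G'.edges := by
  rw [Finset.disjoint_left]
  intro e he he'
  have : e.card ≤ 1 := by
    simpa [h] using Finset.card_le_card (Finset.subset_inter (hG e he) (hG' e he'))
  have := hGr e he
  omega

lemma disjoint_sdiff_of_inter_eq_singleton {S T : Finset α} (h : G.verts ∩ G'.verts = {u})
    (hu : u ∈ S ∨ u ∈ T) : Disjoint (G.verts \ S) (G'.verts \ T) := by
  rw [Finset.disjoint_left]
  intro a ha ha'
  obtain ⟨haG, haS⟩ := Finset.mem_sdiff.1 ha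
  obtain ⟨haG', haT⟩ := Finset.mem_sdiff.1 ha'
  obtain rfl : a = u := Finset.mem_singleton.1 (h ▸ Finset.mem_inter.2 ⟨haG, haG'⟩)
  tauto

-- `e ∩ G'.verts = {u}`, so deleting `e` from `G'` deletes only `u`.
lemma removeVerts_eq_of_inter_eq_singleton (hG : G.WellFormed) (hG' : G'.WellFormed)
    (h : G.verts ∩ G'.verts = {u}) {e : Finset α} (he : e ∈ G.edges.filter (u ∈ ·)) :
    G'.removeVerts e = G'.removeVerts {u} := by
  obtain ⟨he, hue⟩ := Finset.mem_filter.1 he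
  refine removeVerts_congr hG' (Finset.ext fun a => ?_)
  have := Finset.ext_iff.1 h a
  simp only [Finset.mem_inter, Finset.mem_singleton] at this ⊢
  have := @hG e he a
  grind

theorem matchPoly_union_of_inter_eq_singleton {r : ℕ} (hr : 2 ≤ r) (hG : G.WellFormed)
    (hGr : G.Uniform r) (hG' : G'.WellFormed) (hG'r : G'.Uniform r)
    (h : G.verts ∩ G'.verts = {u}) (x : ℝ) :
    (G ∪ G').matchPoly r x
      = G.matchPoly r x * (G'.removeVerts {u}).matchPoly r x
        - (G.removeVerts {u}).matchPoly r x
          * ∑ e ∈ G'.edges.filter (u ∈ ·), (G'.removeVerts e).matchPoly r x := by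
  have hr₀ : 0 < r := by omega
  have hu : u ∈ G.verts := (Finset.mem_inter.1 (h.symm ▸ Finset.mem_singleton_self u)).1
  have h' : G'.verts ∩ G.verts = {u} := by rw [Finset.inter_comm, h]
  have hmul : ∀ {S T : Finset α}, (u ∈ S ∨ u ∈ T) →
      (G.removeVerts S ∪ G'.removeVerts T).matchPoly r x
        = (G.removeVerts S).matchPoly r x * (G'.removeVerts T).matchPoly r x := fun hST =>
    matchPoly_union_of_disjoint hr₀ (hG.removeVerts _) (hGr.removeVerts _)
      (hG'.removeVerts _) (hG'r.removeVerts _) (disjoint_sdiff_of_inter_eq_singleton h hST) x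
  have hthrough_G : ∀ e ∈ G.edges.filter (u ∈ ·), ((G ∪ G').removeVerts e).matchPoly r x
      = (G.removeVerts e).matchPoly r x * (G'.removeVerts {u}).matchPoly r x := fun e he => by
    rw [removeVerts_union, removeVerts_eq_of_inter_eq_singleton hG hG' h he,
      hmul (Or.inl (Finset.mem_filter.1 he).2)]
  have hthrough_G' : ∀ e ∈ G'.edges.filter (u ∈ ·), ((G ∪ G').removeVerts e).matchPoly r x
      = (G.removeVerts {u}).matchPoly r x * (G'.removeVerts e).matchPoly r x := fun e he => by
    rw [removeVerts_union, removeVerts_eq_of_inter_eq_singleton hG' hG h' he,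
      hmul (Or.inl (Finset.mem_singleton_self u))]
  rw [matchPoly_eq_mul_removeVerts_sub_sum hr₀ (hG.union hG') (hGr.union hG'r)
      (Finset.mem_union_left _ hu), removeVerts_union, hmul (Or.inl (Finset.mem_singleton_self u)),
    union_edges, Finset.filter_union, Finset.sum_union (Finset.disjoint_filter_filter
      (disjoint_edges_of_inter_eq_singleton hr hG hG' hGr h)),
    Finset.sum_congr rfl hthrough_G, Finset.sum_congr rfl hthrough_G', ← Finset.sum_mul,
    ← Finset.mul_sum, matchPoly_eq_mul_removeVerts_sub_sum hr₀ hG hGr hu]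
  ring

end Gluing

lemma matchPoly_edgeless (V : Finset α) (r : ℕ) (x : ℝ) :
    (⟨V, ∅⟩ : FinHypergraph α).matchPoly r x = x ^ V.card := by
  have hcount : ∀ k, (⟨V, ∅⟩ : FinHypergraph α).matchCount k = if k = 0 then 1 else 0 := by
    intro k
    split_ifs with hk
    · simp [matchCount, Finset.filter_singleton, IsMatchingSet, hk]
    · simp [matchCount, Finset.filter_singleton, Ne.symm hk]
  simp [matchPoly, hcount]

def loosePath (r m : ℕ) : FinHypergraph ℕ :=
  ⟨Finset.Icc 0 (m * (r - 1)), loosePathEdges r m id⟩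

lemma mem_loosePath_edges {r m : ℕ} {e : Finset ℕ} :
    e ∈ (loosePath r m).edges ↔ ∃ i < m, Finset.Icc (i * (r - 1)) ((i + 1) * (r - 1)) = e := by
  simp [loosePath, loosePathEdges]

lemma loosePath_wellFormed (r m : ℕ) : (loosePath r m).WellFormed := by
  intro e he
  obtain ⟨i, hi, rfl⟩ := mem_loosePath_edges.1 he
  have : (i + 1) * (r - 1) ≤ m * (r - 1) := Nat.mul_le_mul_right _ hi
  exact Finset.Icc_subset_Icc (Nat.zero_le _) this

lemma loosePath_uniform {r : ℕ} (hr : 0 < r) (m : ℕ) : (loosePath r m).Uniform r := by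
  intro e he
  obtain ⟨i, -, rfl⟩ := mem_loosePath_edges.1 he
  rw [Nat.card_Icc, add_one_mul]
  omega

lemma IsLoosePath.eq_map {r m : ℕ} {P : FinHypergraph α} (h : IsLoosePath r m P) :
    ∃ w : ℕ → α, Set.InjOn w (loosePath r m).verts ∧ P = (loosePath r m).map w := by
  obtain ⟨w, hw, hverts, hedges⟩ := h
  refine ⟨w, hw.mono fun t ht => (Finset.mem_Icc.1 (Finset.mem_coe.1 ht)).2, ext hverts ?_⟩
  simp [hedges, loosePath, loosePathEdges, Finset.image_image, Function.comp_def]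

lemma IsLoosePath.matchPoly_eq {r m : ℕ} {P : FinHypergraph α} (h : IsLoosePath r m P)
    (x : ℝ) : P.matchPoly r x = (loosePath r m).matchPoly r x := by
  obtain ⟨w, hw, rfl⟩ := h.eq_map
  exact matchPoly_map (loosePath_wellFormed r m) hw r x

lemma IsPathIdentify.eq_union {r d c : ℕ} {H T : FinHypergraph α} {u : α}
    (hT : IsPathIdentify r d c H u T) (hc : c ≤ d * (r - 1)) (hu : u ∈ H.verts) :
    ∃ w : ℕ → α, Set.InjOn w (loosePath r d).verts ∧ w c = u ∧
      ((loosePath r d).map w).verts ∩ H.verts = {u} ∧ T = (loosePath r d).map w ∪ H := by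
  obtain ⟨w, hw, rfl, hnew, hTv, hTe⟩ := hT
  refine ⟨w, hw.mono fun t ht => (Finset.mem_Icc.1 (Finset.mem_coe.1 ht)).2, rfl, ?_, ?_⟩
  · ext v
    simp only [map_verts, loosePath, Finset.mem_inter, Finset.mem_image, Finset.mem_Icc,
      Finset.mem_singleton]
    constructor
    · rintro ⟨⟨t, ht, rfl⟩, htH⟩
      by_contra hne
      exact hnew t ht.2 (fun h => hne (h ▸ rfl)) htH
    · rintro rfl
      exact ⟨⟨c, ⟨Nat.zero_le c, hc⟩, rfl⟩, hu⟩
  · refine ext (by rw [hTv, Finset.union_comm]; rfl) ?_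
    rw [hTe, Finset.union_comm]
    simp [loosePath, loosePathEdges, Finset.image_image, Function.comp_def]

-- `c` is a core vertex of `e_{i+1} = {i(r-1), …, (i+1)(r-1)}`.
lemma loosePath_removeVerts_core {r m i c : ℕ} (hi : i < m) (hc₁ : i * (r - 1) < c)
    (hc₂ : c < (i + 1) * (r - 1)) :
    (loosePath r m).removeVerts {c}
      = loosePath r i ∪ (⟨Finset.Ioo (i * (r - 1)) ((i + 1) * (r - 1)) \ {c}, ∅⟩
          ∪ (loosePath r (m - 1 - i)).map (· + (i + 1) * (r - 1))) := by
  have hlen : (m - 1 - i) * (r - 1) + (i + 1) * (r - 1) = m * (r - 1) := by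
    rw [← add_mul, show m - 1 - i + (i + 1) = m by omega]
  have hshift : ∀ j, (Finset.Icc (j * (r - 1)) ((j + 1) * (r - 1))).image (· + (i + 1) * (r - 1))
      = Finset.Icc ((j + (i + 1)) * (r - 1)) ((j + (i + 1) + 1) * (r - 1)) := fun j => by
    rw [Finset.image_add_right_Icc]
    congr 1 <;> ring
  ext1
  · ext t
    simp only [removeVerts_verts, union_verts, map_verts, loosePath, Finset.image_add_right_Icc,
      Finset.mem_sdiff, Finset.mem_union, Finset.mem_Icc, Finset.mem_Ioo, Finset.mem_singleton]
    omega
  · ext e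
    simp only [removeVerts_edges, union_edges, map_edges, Finset.mem_filter, Finset.mem_union,
      mem_loosePath_edges, Finset.notMem_empty, false_or, Finset.mem_image,
      Finset.disjoint_singleton_right]
    constructor
    · rintro ⟨⟨j, hj, rfl⟩, hcj⟩
      rw [Nat.mem_Icc_mul_iff_of_lt_of_lt hc₁ hc₂] at hcj
      rcases Nat.lt_or_gt_of_ne hcj with h | h
      · exact Or.inl ⟨j, h, rfl⟩
      · refine Or.inr ⟨_, ⟨j - (i + 1), by omega, rfl⟩, ?_⟩
        rw [hshift, Nat.sub_add_cancel h]
    · rintro (⟨j, hj, rfl⟩ | ⟨_, ⟨j, hj, rfl⟩, rfl⟩)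
      · exact ⟨⟨j, by omega, rfl⟩, by rw [Nat.mem_Icc_mul_iff_of_lt_of_lt hc₁ hc₂]; omega⟩
      · rw [hshift, Nat.mem_Icc_mul_iff_of_lt_of_lt hc₁ hc₂]
        exact ⟨⟨j + (i + 1), by omega, rfl⟩, by omega⟩

theorem matchPoly_loosePath_removeVerts_core {r m i c : ℕ} (hi : i < m)
    (hc₁ : i * (r - 1) < c) (hc₂ : c < (i + 1) * (r - 1)) (x : ℝ) :
    ((loosePath r m).removeVerts {c}).matchPoly r x
      = x ^ (r - 3) * (loosePath r i).matchPoly r x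
          * (loosePath r (m - 1 - i)).matchPoly r x := by
  have hr : 3 ≤ r := by
    by_contra! hr
    have : (i + 1) * (r - 1) = i * (r - 1) + (r - 1) := add_one_mul _ _
    omega
  have hr₀ : 0 < r := by omega
  set b := (i + 1) * (r - 1)
  set core : FinHypergraph ℕ := ⟨Finset.Ioo (i * (r - 1)) b \ {c}, ∅⟩
  set tail := (loosePath r (m - 1 - i)).map (· + b)
  have hshift_inj : Set.InjOn (· + b) (loosePath r (m - 1 - i)).verts :=
    (add_left_injective b).injOn
  have hcore_wf : core.WellFormed := fun e he => by simp [core] at he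
  have hcore_unif : core.Uniform r := fun e he => by simp [core] at he
  have htail_wf : tail.WellFormed := (loosePath_wellFormed _ _).map _
  have htail_unif : tail.Uniform r :=
    (loosePath_uniform hr₀ _).map (loosePath_wellFormed _ _) hshift_inj
  have hcore_card : core.verts.card = r - 3 := by
    rw [Finset.card_sdiff_of_subset (by simpa using ⟨hc₁, hc₂⟩), Nat.card_Ioo,
      Finset.card_singleton, show b = i * (r - 1) + (r - 1) from add_one_mul _ _]
    omega
  have hdisj_core : Disjoint core.verts tail.verts := by
    simp only [core, tail, map_verts, loosePath, Finset.image_add_right_Icc, Finset.disjoint_left,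
      Finset.mem_sdiff, Finset.mem_Ioo, Finset.mem_Icc]
    omega
  have hdisj_head : Disjoint (loosePath r i).verts (core ∪ tail).verts := by
    simp only [core, tail, union_verts, map_verts, loosePath, Finset.image_add_right_Icc,
      Finset.disjoint_left, Finset.mem_union, Finset.mem_sdiff, Finset.mem_Ioo, Finset.mem_Icc]
    omega
  rw [loosePath_removeVerts_core hi hc₁ hc₂,
    matchPoly_union_of_disjoint hr₀ (loosePath_wellFormed r i) (loosePath_uniform hr₀ i)
      (hcore_wf.union htail_wf) (hcore_unif.union htail_unif) hdisj_head,
    matchPoly_union_of_disjoint hr₀ hcore_wf hcore_unif htail_wf htail_unif hdisj_core,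
    matchPoly_edgeless, hcore_card, matchPoly_map (loosePath_wellFormed _ _) hshift_inj]
  ring

end FinHypergraph

/-- For `r ≥ 3`, `d ≥ 3`, an `r`-uniform supertree `H` with a vertex
`u`, and `j = ⌈d/2⌉`, the hypergraph `P_d^r(e_j,u)H` obtained by identifying a core
(non-joint) vertex of the edge `e_j` of the loose path `P_d^r` with `u` satisfies
`φ(P_d^r(e_j,u)H, x) = φ(P_d^r,x)·φ(H−u,x)
  − x^(r−3)·φ(P_{⌊d/2⌋}^r,x)·φ(P_{⌈d/2⌉−1}^r,x)·Σ_{e ∈ E_u(H)} φ(H−V(e),x)`. -/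
theorem matchPoly_path_core_identify {α : Type*} (r d : ℕ) (hr : 3 ≤ r) (hd : 3 ≤ d)
    (H : FinHypergraph α) (hH : H.IsSupertree r) (u : α) (hu : u ∈ H.verts)
    (c : ℕ) (hc1 : ((d + 1) / 2 - 1) * (r - 1) < c) (hc2 : c < ((d + 1) / 2) * (r - 1))
    (T Pd P1 P2 : FinHypergraph α)
    (hT : IsPathIdentify r d c H u T)
    (hPd : IsLoosePath r d Pd)
    (hP1 : IsLoosePath r (d / 2) P1) (hP2 : IsLoosePath r ((d + 1) / 2 - 1) P2) :
    ∀ x : ℝ, T.matchPoly r x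
      = Pd.matchPoly r x * (H.removeVerts {u}).matchPoly r x
        - x ^ (r - 3) * P1.matchPoly r x * P2.matchPoly r x *
            ∑ e ∈ H.edges.filter (fun e => u ∈ e), (H.removeVerts e).matchPoly r x := by
  intro x
  obtain ⟨hH_wf, hH_unif, -, -⟩ := hH
  have hj : (d + 1) / 2 - 1 + 1 = (d + 1) / 2 := by omega
  have hc : c ≤ d * (r - 1) := hc2.le.trans (Nat.mul_le_mul_right _ (by omega))
  obtain ⟨w, hw, rfl, hglue, rfl⟩ := hT.eq_union hc hu
  have hP_wf := loosePath_wellFormed r d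
  rw [matchPoly_union_of_inter_eq_singleton (by omega) (hP_wf.map w)
      ((loosePath_uniform (by omega) d).map hP_wf hw) hH_wf hH_unif hglue,
    matchPoly_map hP_wf hw,
    matchPoly_map_removeVerts_singleton hP_wf hw (Finset.mem_Icc.2 ⟨c.zero_le, hc⟩),
    matchPoly_loosePath_removeVerts_core (by omega) hc1 (hj ▸ hc2),
    show d - 1 - ((d + 1) / 2 - 1) = d / 2 by omega,
    hPd.matchPoly_eq, hP1.matchPoly_eq, hP2.matchPoly_eq]
  ring
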